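/- Let G be a D-regular Bonnet-Myers sharp graph of diameter L, x_0 a pole, and x_1 a neighbor of x_0. Then the out-degree of x_1 with respect to x_0 equals D − 2D/L + 1 and the spherical degree equals 2D/L − 2. In particular, the edge x_0 ~ x_1 lies in exactly 2D/L − 2 triangles. -/

import Mathlib

open Finset

namespace BMS

open scoped Classical

variable {V : Type*}

/-- The uniform probability measure on the closed 1-ball of `x` in a `D`-regular graph. -/
noncomputable def mu (G : SimpleGraph V) (D : ℕ) (x : V) : V → ℝ :=
  fun v => if G.dist x v ≤ 1 then 1 / (D + 1) else 0

/-- The L¹-Wasserstein distance between `μ_x` and `μ_y`, as an infimum over transport plans. -/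
noncomputable def W1 (G : SimpleGraph V) [Fintype V] (D : ℕ) (x y : V) : ℝ :=
  sInf { c : ℝ | ∃ π : V → V → ℝ,
    (∀ u v, 0 ≤ π u v) ∧
    (∀ u, ∑ v, π u v = mu G D x u) ∧
    (∀ v, ∑ u, π u v = mu G D y v) ∧
    c = ∑ u, ∑ v, (G.dist u v : ℝ) * π u v }

/-- Ollivier Ricci curvature (Lin–Lu–Yau normalization for regular graphs). -/
noncomputable def kappa (G : SimpleGraph V) [Fintype V] (D : ℕ) (x y : V) : ℝ :=
  ((D + 1) / D) * (1 - W1 G D x y)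

/-- `G` is Bonnet–Myers sharp: the infimum of the curvature over edges equals `2 / L`. -/
def BMSharp (G : SimpleGraph V) [Fintype V] (D L : ℕ) : Prop :=
  sInf { k : ℝ | ∃ x y, G.Adj x y ∧ k = kappa G D x y } = 2 / (L : ℝ)

/-- Number of neighbors of `y` at distance `k` from `x0`. -/
noncomputable def sphDeg (G : SimpleGraph V) [Fintype V] (x0 y : V) (k : ℕ) : ℕ :=
  (Finset.univ.filter (fun v => G.Adj y v ∧ G.dist x0 v = k)).card

/-- Number of triangles containing the edge `x ~ y` (common neighbors of `x` and `y`). -/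
noncomputable def tri (G : SimpleGraph V) [Fintype V] (x y : V) : ℕ :=
  (Finset.univ.filter (fun v => G.Adj x v ∧ G.Adj y v)).card

/-- A good optimal transport map from `B_1(a)` to `B_1(b)`: a bijection between the 1-balls,
fixing exactly the vertices of `B_1(a) ∩ B_1(b)` (among the domain), whose cost realizes
the Wasserstein distance `W1 (μ_a, μ_b)`. -/
def goodMap (G : SimpleGraph V) [Fintype V] (D : ℕ) (a b : V) (T : V → V) : Prop :=
  Set.BijOn T {v | G.dist a v ≤ 1} {v | G.dist b v ≤ 1} ∧
  (∀ v, G.dist a v ≤ 1 → (T v = v ↔ G.dist b v ≤ 1)) ∧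
  (1 / (D + 1 : ℝ)) *
      ∑ v ∈ Finset.univ.filter (fun v => G.dist a v ≤ 1), (G.dist v (T v) : ℝ) =
    W1 G D a b


/-!
Let `ballSum f x = f x + ∑_{v ~ x} f v`, which is `(D + 1)` times the mean of `f` under `μ_x`.
Testing `W₁` against 1-Lipschitz functions, every edge `a ~ b` of a Bonnet–Myers sharp graph
satisfies `ballSum f b - ballSum f a ≤ D + 1 - 2D/L`, hence along a walk of length `n` the
increment is at most `n (D + 1 - 2D/L)`. Let `z` be at distance `L` from the pole `x₀`.
With `f = d(z, ·)` along a geodesic from `z` to `x₀` this bound forces every neighbour of `x₀`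
to lie at distance `L - 1` from `z`. With `f = d(x₀, ·)` along the edge `x₀ ~ x₁` followed by
a geodesic from `x₁` to `z` (total length `L`), the trivial lower bound for `ballSum f z` makes
all the edge bounds tight; tightness on `x₀ ~ x₁` gives `∑_{v ~ x₁} d(x₀, v) = 2D - 2D/L`.
Since the neighbours of `x₁` lie at distance `0`, `1` or `2` from `x₀`, and exactly one at
distance `0`, this sum is `d⁰ + 2 d⁺` while `1 + d⁰ + d⁺ = D`.
-/

theorem dist_le_dist_add_one_of_adj {G : SimpleGraph V} {v w : V} (h : G.Adj v w) (u : V) :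
    G.dist u w ≤ G.dist u v + 1 := by
  simpa [SimpleGraph.dist_eq_one_iff_adj.mpr h] using h.reachable.dist_triangle_right u

theorem dist_sub_dist_le {G : SimpleGraph V} (hconn : G.Connected) (p u v : V) :
    (G.dist p v : ℝ) - G.dist p u ≤ G.dist u v := by
  have : G.dist p v ≤ G.dist p u + G.dist u v := (hconn u v).dist_triangle_right p
  rw [sub_le_iff_le_add']
  exact_mod_cast this

theorem sub_le_length_mul_of_adj {G : SimpleGraph V} {g : V → ℝ} {w : ℝ}
    (h : ∀ a b, G.Adj a b → g b - g a ≤ w) {a b : V} (p : G.Walk a b) :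
    g b - g a ≤ p.length * w := by
  induction p with
  | nil => simp
  | cons hadj p ih =>
    rw [SimpleGraph.Walk.length_cons, Nat.cast_succ]
    linarith [h _ _ hadj]

theorem mu_nonneg (G : SimpleGraph V) (D : ℕ) (x v : V) : 0 ≤ mu G D x v := by
  unfold mu; split_ifs <;> positivity

section Transport

variable [Fintype V] {G : SimpleGraph V} {D L : ℕ}

noncomputable def ballSum (G : SimpleGraph V) (f : V → ℝ) (x : V) : ℝ :=
  f x + ∑ v ∈ G.neighborFinset x, f v

theorem filter_dist_le_one_eq_insert_neighborFinset (hconn : G.Connected) (x : V) :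
    univ.filter (fun v => G.dist x v ≤ 1) = insert x (G.neighborFinset x) := by
  ext v
  simp only [mem_filter, mem_univ, true_and, mem_insert, SimpleGraph.mem_neighborFinset,
    Nat.le_one_iff_eq_zero_or_eq_one, hconn.dist_eq_zero_iff, SimpleGraph.dist_eq_one_iff_adj,
    @eq_comm _ v x]

theorem sum_mul_mu (hconn : G.Connected) (f : V → ℝ) (x : V) :
    ∑ v, f v * mu G D x v = ballSum G f x / (D + 1) := by
  simp only [mu, mul_ite, mul_zero, ← sum_filter,
    filter_dist_le_one_eq_insert_neighborFinset hconn, ← sum_mul, ballSum,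
    sum_insert (SimpleGraph.notMem_neighborFinset_self G x)]
  ring

theorem ballSum_const (hreg : G.IsRegularOfDegree D) (c : ℝ) (x : V) :
    ballSum G (fun _ => c) x = (D + 1) * c := by
  simp only [ballSum, sum_const, SimpleGraph.card_neighborFinset_eq_degree, hreg x, nsmul_eq_mul]
  ring

theorem sum_mu (hconn : G.Connected) (hreg : G.IsRegularOfDegree D) (x : V) :
    ∑ v, mu G D x v = 1 := by
  have h := sum_mul_mu (D := D) hconn (fun _ => 1) x
  rw [ballSum_const hreg] at h
  simpa [field] using h

/-- The easy half of Kantorovich duality. -/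
theorem sum_mul_mu_sub_le_W1 (hconn : G.Connected) (hreg : G.IsRegularOfDegree D)
    {f : V → ℝ} (hf : ∀ u v, f v - f u ≤ G.dist u v) (a b : V) :
    ∑ v, f v * mu G D b v - ∑ v, f v * mu G D a v ≤ W1 G D a b := by
  apply le_csInf
  · refine ⟨_, fun u v => mu G D a u * mu G D b v,
      fun u v => mul_nonneg (mu_nonneg G D a u) (mu_nonneg G D b v), fun u => ?_,
      fun v => ?_, rfl⟩
    · rw [← mul_sum, sum_mu hconn hreg, mul_one]
    · rw [← sum_mul, sum_mu hconn hreg, one_mul]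
  · rintro c ⟨π, hπ, hπa, hπb, rfl⟩
    calc ∑ v, f v * mu G D b v - ∑ v, f v * mu G D a v
        = ∑ u, ∑ v, (f v - f u) * π u v := by
          simp only [sub_mul, sum_sub_distrib, ← hπa, ← hπb, mul_sum]
          rw [sum_comm (f := fun u v => f v * π u v)]
      _ ≤ ∑ u, ∑ v, (G.dist u v : ℝ) * π u v :=
          sum_le_sum fun u _ => sum_le_sum fun v _ =>
            mul_le_mul_of_nonneg_right (hf u v) (hπ u v)

theorem ballSum_sub_le_W1 (hconn : G.Connected) (hreg : G.IsRegularOfDegree D)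
    {f : V → ℝ} (hf : ∀ u v, f v - f u ≤ G.dist u v) (a b : V) :
    ballSum G f b - ballSum G f a ≤ (D + 1) * W1 G D a b := by
  have h := sum_mul_mu_sub_le_W1 hconn hreg hf a b
  rw [sum_mul_mu hconn, sum_mul_mu hconn, ← sub_div, div_le_iff₀ (by positivity)] at h
  linarith

theorem add_one_mul_W1_le_of_adj (hD : 0 < D) (hBM : BMSharp G D L) {a b : V} (hab : G.Adj a b) :
    (D + 1) * W1 G D a b ≤ D + 1 - 2 * D / L := by
  have hbdd : BddBelow {k : ℝ | ∃ x y, G.Adj x y ∧ k = kappa G D x y} :=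
    ((Set.finite_range fun p : V × V => kappa G D p.1 p.2).subset
      (by rintro k ⟨x, y, -, rfl⟩; exact ⟨(x, y), rfl⟩)).bddBelow
  have hκ : 2 / (L : ℝ) ≤ kappa G D a b := hBM ▸ csInf_le hbdd ⟨a, b, hab, rfl⟩
  have hD' : (0 : ℝ) < D := by exact_mod_cast hD
  have : 2 * D / (L : ℝ) ≤ (D + 1) * (1 - W1 G D a b) :=
    calc 2 * D / (L : ℝ) = D * (2 / L) := by ring
      _ ≤ D * kappa G D a b := by gcongr
      _ = (D + 1) * (1 - W1 G D a b) := by rw [kappa]; field_simp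
  linarith

theorem ballSum_sub_le_of_adj (hconn : G.Connected) (hD : 0 < D) (hreg : G.IsRegularOfDegree D)
    (hBM : BMSharp G D L) {f : V → ℝ} (hf : ∀ u v, f v - f u ≤ G.dist u v) {a b : V}
    (hab : G.Adj a b) :
    ballSum G f b - ballSum G f a ≤ D + 1 - 2 * D / L :=
  (ballSum_sub_le_W1 hconn hreg hf a b).trans (add_one_mul_W1_le_of_adj hD hBM hab)

theorem ballSum_sub_le_of_walk (hconn : G.Connected) (hD : 0 < D)
    (hreg : G.IsRegularOfDegree D) (hBM : BMSharp G D L) {f : V → ℝ}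
    (hf : ∀ u v, f v - f u ≤ G.dist u v) {a b : V} (p : G.Walk a b) :
    ballSum G f b - ballSum G f a ≤ p.length * (D + 1 - 2 * D / L) :=
  sub_le_length_mul_of_adj (fun _ _ => ballSum_sub_le_of_adj hconn hD hreg hBM hf) p

theorem ballSum_dist_self (hreg : G.IsRegularOfDegree D) (x : V) :
    ballSum G (fun v => (G.dist x v : ℝ)) x = D := by
  have h : ∀ v ∈ G.neighborFinset x, (G.dist x v : ℝ) = 1 := fun v hv => by
    rw [SimpleGraph.dist_eq_one_iff_adj.mpr ((G.mem_neighborFinset x v).mp hv), Nat.cast_one]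
  simp only [ballSum, SimpleGraph.dist_self, Nat.cast_zero, zero_add, sum_congr rfl h,
    sum_const, SimpleGraph.card_neighborFinset_eq_degree, hreg x, nsmul_one]

theorem le_ballSum_dist (hreg : G.IsRegularOfDegree D) (p x : V) :
    G.dist p x + D * (G.dist p x - 1 : ℝ) ≤ ballSum G (fun v => (G.dist p v : ℝ)) x := by
  have h : ∀ v ∈ G.neighborFinset x, (G.dist p x - 1 : ℝ) ≤ G.dist p v := fun v hv => by
    have := dist_le_dist_add_one_of_adj ((G.mem_neighborFinset x v).mp hv).symm p
    rw [sub_le_iff_le_add]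
    exact_mod_cast this
  have := sum_le_sum h
  rw [sum_const, SimpleGraph.card_neighborFinset_eq_degree, hreg x, nsmul_eq_mul] at this
  rw [ballSum]
  linarith

theorem dist_add_one_eq_of_adj (hconn : G.Connected) (hD : 0 < D) (hL : 0 < L)
    (hreg : G.IsRegularOfDegree D) (hBM : BMSharp G D L) {x0 x1 z : V}
    (hz : G.dist x0 z = L) (hx1 : G.Adj x0 x1) :
    G.dist x1 z + 1 = L := by
  have hz' : G.dist z x0 = L := SimpleGraph.dist_comm.trans hz
  have hlow : L ≤ G.dist z x1 + 1 := hz' ▸ dist_le_dist_add_one_of_adj hx1.symm z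
  obtain ⟨p, hp⟩ := hconn.exists_walk_length_eq_dist z x0
  have hwalk := ballSum_sub_le_of_walk hconn hD hreg hBM (dist_sub_dist_le hconn z) p
  rw [hp, hz', ballSum_dist_self hreg, ballSum, hz'] at hwalk
  have hterm : ∀ v ∈ G.neighborFinset x0, 0 ≤ (G.dist z v : ℝ) - (L - 1) := fun v hv => by
    have := hz' ▸ dist_le_dist_add_one_of_adj ((G.mem_neighborFinset x0 v).mp hv).symm z
    rw [sub_nonneg, sub_le_iff_le_add]
    exact_mod_cast this
  have hsingle := single_le_sum hterm ((G.mem_neighborFinset x0 x1).mpr hx1)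
  rw [sum_sub_distrib, sum_const, SimpleGraph.card_neighborFinset_eq_degree, hreg x0,
    nsmul_eq_mul] at hsingle
  have hLt : (L : ℝ) * (2 * D / L) = 2 * D := mul_div_cancel₀ _ (by positivity)
  have hup : (G.dist z x1 : ℝ) + 1 ≤ L := by linarith
  rw [SimpleGraph.dist_comm]
  have : G.dist z x1 + 1 ≤ L := by exact_mod_cast hup
  omega

/-- The Bonnet–Myers bound is tight on the edge `x0 ~ x1`. -/
theorem sum_dist_neighborFinset_eq (hconn : G.Connected) (hD : 0 < D) (hL : 0 < L)
    (hreg : G.IsRegularOfDegree D) (hBM : BMSharp G D L) {x0 x1 z : V}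
    (hz : G.dist x0 z = L) (hx1 : G.Adj x0 x1) :
    ∑ v ∈ G.neighborFinset x1, (G.dist x0 v : ℝ) = 2 * D - 2 * D / L := by
  have hf := dist_sub_dist_le hconn x0
  obtain ⟨p, hp⟩ := hconn.exists_walk_length_eq_dist x1 z
  have hpL : (p.length : ℝ) = L - 1 := by
    rw [hp, eq_sub_iff_add_eq]
    exact_mod_cast dist_add_one_eq_of_adj hconn hD hL hreg hBM hz hx1
  have hfar := ballSum_sub_le_of_walk hconn hD hreg hBM hf p
  have hnear := ballSum_sub_le_of_adj hconn hD hreg hBM hf hx1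
  have hzlow := le_ballSum_dist hreg x0 z
  have hx1sum : ballSum G (fun v => (G.dist x0 v : ℝ)) x1
      = 1 + ∑ v ∈ G.neighborFinset x1, (G.dist x0 v : ℝ) := by
    rw [ballSum, SimpleGraph.dist_eq_one_iff_adj.mpr hx1, Nat.cast_one]
  rw [hpL] at hfar
  rw [ballSum_dist_self hreg] at hnear
  rw [hz] at hzlow
  have hLt : (L : ℝ) * (2 * D / L) = 2 * D := mul_div_cancel₀ _ (by positivity)
  apply le_antisymm <;> linarith

end Transport

theorem dist_mem_range_of_adj {G : SimpleGraph V} {y v : V} (h : G.Adj y v) (x0 : V) :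
    G.dist x0 v ∈ range (G.dist x0 y + 2) :=
  mem_range.mpr (Nat.lt_succ_of_le (dist_le_dist_add_one_of_adj h x0))

section Counting

variable [Fintype V]

theorem sphDeg_eq_card_filter_neighborFinset (G : SimpleGraph V) (x0 y : V) (k : ℕ) :
    sphDeg G x0 y k = #{v ∈ G.neighborFinset y | G.dist x0 v = k} := by
  rw [sphDeg, SimpleGraph.neighborFinset_eq_filter, filter_filter]

theorem sphDeg_zero_of_adj {G : SimpleGraph V} (hconn : G.Connected) {x0 y : V}
    (h : G.Adj x0 y) : sphDeg G x0 y 0 = 1 := by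
  rw [sphDeg, card_eq_one]
  refine ⟨x0, ext fun v => ?_⟩
  simp only [mem_filter, mem_univ, true_and, mem_singleton, hconn.dist_eq_zero_iff]
  exact ⟨fun hv => hv.2.symm, by rintro rfl; exact ⟨h.symm, rfl⟩⟩

theorem tri_eq_sphDeg_one (G : SimpleGraph V) (x y : V) : tri G x y = sphDeg G x y 1 := by
  simp only [tri, sphDeg, SimpleGraph.dist_eq_one_iff_adj, and_comm]

theorem degree_eq_sum_sphDeg (G : SimpleGraph V) (x0 y : V) :
    G.degree y = ∑ k ∈ range (G.dist x0 y + 2), sphDeg G x0 y k := by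
  simp only [sphDeg_eq_card_filter_neighborFinset, ← SimpleGraph.card_neighborFinset_eq_degree]
  exact card_eq_sum_card_fiberwise fun v hv =>
    dist_mem_range_of_adj ((G.mem_neighborFinset y v).mp hv) x0

theorem sum_dist_neighborFinset_eq_sum_mul_sphDeg (G : SimpleGraph V) (x0 y : V) :
    ∑ v ∈ G.neighborFinset y, G.dist x0 v
      = ∑ k ∈ range (G.dist x0 y + 2), k * sphDeg G x0 y k := by
  rw [← sum_fiberwise_of_maps_to fun v hv =>
    dist_mem_range_of_adj ((G.mem_neighborFinset y v).mp hv) x0]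
  refine sum_congr rfl fun k _ => ?_
  rw [sum_congr rfl fun v hv => (mem_filter.mp hv).2, sum_const, smul_eq_mul, mul_comm,
    sphDeg_eq_card_filter_neighborFinset]

end Counting

theorem stmt_general [Fintype V] (G : SimpleGraph V) (hconn : G.Connected)
    (D L : ℕ) (hD : 0 < D) (hL : 0 < L) (hreg : G.IsRegularOfDegree D)
    (hBM : BMSharp G D L)
    (x0 : V) (hpole : ∃ p, G.dist x0 p = L)
    (x1 : V) (hx1 : G.Adj x0 x1) :
    (sphDeg G x0 x1 2 : ℝ) = D - 2 * D / L + 1 ∧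
    (sphDeg G x0 x1 1 : ℝ) = 2 * D / L - 2 ∧
    (tri G x0 x1 : ℝ) = 2 * D / L - 2 := by
  obtain ⟨z, hz⟩ := hpole
  have hsum := sum_dist_neighborFinset_eq hconn hD hL hreg hBM hz hx1
  have hdist := sum_dist_neighborFinset_eq_sum_mul_sphDeg G x0 x1
  have hdeg := degree_eq_sum_sphDeg G x0 x1
  simp only [SimpleGraph.dist_eq_one_iff_adj.mpr hx1, sum_range_succ, sum_range_zero,
    sphDeg_zero_of_adj hconn hx1, hreg x1] at hdist hdeg
  rw [← Nat.cast_sum, hdist] at hsum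
  have hdeg' : (D : ℝ) = 1 + sphDeg G x0 x1 1 + sphDeg G x0 x1 2 := by
    rw [hdeg]; push_cast; ring
  push_cast at hsum
  rw [tri_eq_sphDeg_one]
  refine ⟨?_, ?_, ?_⟩ <;> linarith

theorem stmt [Fintype V] (G : SimpleGraph V) (hconn : G.Connected)
    (D L : ℕ) (hD : 0 < D) (hL : 0 < L) (hreg : G.IsRegularOfDegree D)
    (hdiam : G.diam = L) (hBM : BMSharp G D L)
    (x0 : V) (hpole : ∃ p, G.dist x0 p = L)
    (x1 : V) (hx1 : G.Adj x0 x1) :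
    (sphDeg G x0 x1 2 : ℝ) = D - 2 * D / L + 1 ∧
    (sphDeg G x0 x1 1 : ℝ) = 2 * D / L - 2 ∧
    (tri G x0 x1 : ℝ) = 2 * D / L - 2 :=
  stmt_general G hconn D L hD hL hreg hBM x0 hpole x1 hx1

end BMS
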